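/- arXiv:1604.04746 — 3 statements merged into one kernel-verified Lean document; each statement's English description precedes it below -/
import Mathlib

section
/- Let M be a class of morphisms of simplicial sets such that: (i) every member of M is a Kan fibration; (ii) M is closed under pullback along arbitrary morphisms (any pullback of a member of M is in M); (iii) M has the descent property: for every horn inclusion h : Λ[n,k] ⟶ Δ[n] and every f : X ⟶ Λ[n,k] in M there exists g : Y ⟶ Δ[n] in M whose pullback along h is isomorphic to f over Λ[n,k]. Suppose 𝓊 : U ⟶ V belongs to M and is universal for M, meaning that every f : X ⟶ Z in M is the pullback of 𝓊 along a unique morphism χ(f) : Z ⟶ V. Then V is a Kan complex: every morphism Λ[n,k] ⟶ V (n ≥ 1, 0 ≤ k ≤ n) extends along the horn inclusion to a morphism Δ[n] ⟶ V. -/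
open CategoryTheory Simplicial CategoryTheory.GrothendieckTopology

universe u

/-- A morphism of simplicial sets is a *Kan fibration* if it has the right lifting
property with respect to every horn inclusion `Λ[n, i] ⟶ Δ[n]` with `n ≥ 1`. -/
def IsKanFibration {X Y : SSet} (f : X ⟶ Y) : Prop :=
  ∀ ⦃n : ℕ⦄ (i : Fin (n + 2)), HasLiftingProperty (Λ[n + 1, i].ι) f

/-!
A horn `σ₀ : Λ[n, k] ⟶ V` classifies the pullback `f` of `u` along it. By descent, `f` is
the restriction to the horn of some `g` in `M` over `Δ[n]`, and the classifying map `σ` of `g`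
restricted to the horn classifies `f` as well (pasting of pullbacks). Uniqueness of
classifying maps then gives `σ₀ = Λ[n, k].ι ≫ σ`.
-/

namespace CategoryTheory.MorphismProperty

variable {C : Type*} [Category C]

def IsClassifier (M : MorphismProperty C) {U V : C} (u : U ⟶ V) : Prop :=
  ∀ {X Z : C} (f : X ⟶ Z), M f → ∃! χ : Z ⟶ V, ∃ t : X ⟶ U, IsPullback t f u χ

namespace IsClassifier

variable {M : MorphismProperty C} {U V : C} {u : U ⟶ V}

theorem eq_of_isPullback (hu : M.IsClassifier u) {X Z : C} {f : X ⟶ Z} (hf : M f)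
    {χ χ' : Z ⟶ V} {t t' : X ⟶ U} (h : IsPullback t f u χ) (h' : IsPullback t' f u χ') :
    χ = χ' :=
  (hu f hf).unique ⟨t, h⟩ ⟨t', h'⟩

theorem exists_eq_comp_of_isPullback (hu : M.IsClassifier u) {A B X Y : C} (i : A ⟶ B)
    {σ₀ : A ⟶ V} {f : X ⟶ A} {x : X ⟶ U} (hσ₀ : IsPullback x f u σ₀) (hf : M f)
    {g : Y ⟶ B} {t : X ⟶ Y} (hg : M g) (hfg : IsPullback t f g i) :
    ∃ σ : B ⟶ V, σ₀ = i ≫ σ := by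
  obtain ⟨σ, ⟨y, hσ⟩, -⟩ := hu g hg
  exact ⟨σ, hu.eq_of_isPullback hf hσ₀ (hfg.paste_horiz hσ)⟩

end IsClassifier

end CategoryTheory.MorphismProperty

open Limits in
theorem fibrant_universe_general (M : MorphismProperty SSet)
    (hpb : ∀ {P X Y Z : SSet} (p₁ : P ⟶ X) (p₂ : P ⟶ Y) (f : X ⟶ Z) (g : Y ⟶ Z),
      IsPullback p₁ p₂ f g → M f → M p₂)
    (hdesc : ∀ (n : ℕ), 1 ≤ n → ∀ (k : Fin (n + 1)) {X : SSet} (f : X ⟶ Λ[n, k]),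
      M f → ∃ (Y : SSet) (g : Y ⟶ Δ[n]) (t : X ⟶ Y),
        M g ∧ IsPullback t f g (Λ[n, k].ι))
    {U V : SSet} (u : U ⟶ V) (hu : M u)
    (huniv : ∀ {X Z : SSet} (f : X ⟶ Z), M f →
      ∃! χ : Z ⟶ V, ∃ t : X ⟶ U, IsPullback t f u χ) :
    ∀ (n : ℕ), 1 ≤ n → ∀ (k : Fin (n + 1)) (σ₀ : (Λ[n, k] : SSet) ⟶ V),
      ∃ σ : Δ[n] ⟶ V, σ₀ = Λ[n, k].ι ≫ σ := by
  intro n hn k σ₀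
  have hσ₀ : IsPullback (pullback.fst u σ₀) (pullback.snd u σ₀) u σ₀ :=
    IsPullback.of_hasPullback u σ₀
  have hf : M (pullback.snd u σ₀) := hpb _ _ _ _ hσ₀ hu
  obtain ⟨Y, g, t, hg, hfg⟩ := hdesc n hn k _ hf
  exact MorphismProperty.IsClassifier.exists_eq_comp_of_isPullback huniv _ hσ₀ hf hg hfg

/-- If `𝓊 : U ⟶ V` is a universal modest fibration, then `V` is fibrant (a Kan
complex): given a class `M` of Kan fibrations closed under pullback and satisfying
descent along horn inclusions, if every member of `M` is the pullback of `𝓊` along a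
unique classifying morphism, then every horn `Λ[n, k] ⟶ V` extends to `Δ[n] ⟶ V`. -/
theorem fibrant_universe (M : MorphismProperty SSet)
    (hkan : ∀ {X Y : SSet} (f : X ⟶ Y), M f → IsKanFibration f)
    (hpb : ∀ {P X Y Z : SSet} (p₁ : P ⟶ X) (p₂ : P ⟶ Y) (f : X ⟶ Z) (g : Y ⟶ Z),
      IsPullback p₁ p₂ f g → M f → M p₂)
    (hdesc : ∀ (n : ℕ), 1 ≤ n → ∀ (k : Fin (n + 1)) {X : SSet} (f : X ⟶ Λ[n, k]),
      M f → ∃ (Y : SSet) (g : Y ⟶ Δ[n]) (t : X ⟶ Y),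
        M g ∧ IsPullback t f g (Λ[n, k].ι))
    {U V : SSet} (u : U ⟶ V) (hu : M u)
    (huniv : ∀ {X Z : SSet} (f : X ⟶ Z), M f →
      ∃! χ : Z ⟶ V, ∃ t : X ⟶ U, IsPullback t f u χ) :
    ∀ (n : ℕ), 1 ≤ n → ∀ (k : Fin (n + 1)) (σ₀ : (Λ[n, k] : SSet) ⟶ V),
      ∃ σ : Δ[n] ⟶ V, σ₀ = Λ[n, k].ι ≫ σ :=
  fibrant_universe_general M hpb hdesc u hu huniv
end

section
/- Let p ≥ 0, e ∈ Fin(p+1), and let F be a set of subsets of Fin(p+1) each containing e. Let j ≥ 1 and let Σ ⊆ Fin(p+1) satisfy e ∈ Σ, |Σ| = j+1, and Σ is not contained in any member of F. Set F_{j-1} = F ∪ { T ⊆ Fin(p+1) : e ∈ T and |T| = j }. Then, as subpresheaves of Δ[p], Face(Σ) ⊓ (⨆_{T ∈ F_{j-1}} Face(T)) = ⨆_{i ∈ Σ, i ≠ e} Face(Σ \ {i}); that is, the intersection of the face on Σ with the union of the faces indexed by F_{j-1} is the horn of Face(Σ) centered at the vertex e. -/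
open CategoryTheory Simplicial CategoryTheory.GrothendieckTopology

universe u

namespace CategoryTheory.GrothendieckTopology.Subpresheaf

variable {C : Type*} [Category C] {F : Cᵒᵖ ⥤ Type u}

instance : InfSet (Subfunctor F) where
  sInf S :=
    { obj := fun U => ⋂ G ∈ S, Subfunctor.obj G U
      map := by
        intro U V i x hx
        simp only [Set.mem_iInter, Set.mem_preimage] at hx ⊢
        intro G hG
        exact G.map i (hx G hG) }

theorem sInf_obj (S : Set (Subfunctor F)) (U : Cᵒᵖ) :
    (sInf S).obj U = ⋂ G ∈ S, Subfunctor.obj G U := rfl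

/-- Subpresheaves of a presheaf of types form a complete lattice under objectwise
inclusion, with intersections (and hence unions) computed objectwise. -/
noncomputable instance : CompleteLattice (Subfunctor F) :=
  completeLatticeOfInf _ (fun S =>
    ⟨fun G hG U x hx => by
        rw [sInf_obj] at hx
        exact Set.mem_iInter₂.1 hx G hG,
     fun G hG U x hx => by
        rw [sInf_obj]
        exact Set.mem_iInter₂.2 fun H hH => hG hH U hx⟩)

end CategoryTheory.GrothendieckTopology.Subpresheaf

namespace CategoryTheory.GrothendieckTopology

/-- A subpresheaf of a simplicial set, regarded as a simplicial set. -/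
def Subpresheaf.sset {F : SSet} (G : Subfunctor F) : SSet := G.toFunctor

/-- The inclusion morphism of a subpresheaf of a simplicial set. -/
def Subpresheaf.ssetι {F : SSet} (G : Subfunctor F) : Subpresheaf.sset G ⟶ F := G.ι

/-- The inclusion morphism between two nested subpresheaves of a simplicial set. -/
def Subpresheaf.ssetHomOfLe {F : SSet} {G G' : Subfunctor F} (h : G ≤ G') :
    Subpresheaf.sset G ⟶ Subpresheaf.sset G' := Subfunctor.homOfLe h

end CategoryTheory.GrothendieckTopology

/-- `SSet.face p S` is the face of the standard simplex `Δ[p]` spanned by the set of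
vertices `S ⊆ Fin (p+1)` : the subpresheaf whose simplices are the monotone maps with
image (range) contained in `S`. -/
def SSet.face (p : ℕ) (S : Set (Fin (p + 1))) : Subfunctor (Δ[p] : SSet) where
  obj m := { α | Set.range (SSet.stdSimplex.asOrderHom α) ⊆ S }
  map := by
    intro U V i x hx y hy
    apply hx
    obtain ⟨z, rfl⟩ := hy
    exact ⟨i.unop.toOrderHom z, rfl⟩

/-!
Intersecting with `Face(Σ)` distributes over the union, turning `Face(T)` into `Face(Σ ∩ T)`.
Every `T` in `F_{j-1}` contains `e` but not `Σ` (members of `F` by hypothesis, the others for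
cardinality reasons), so it misses some vertex `i ≠ e` of `Σ`, and `Face(Σ ∩ T) ≤ Face(Σ \ {i})`.
Conversely each `Σ \ {i}` with `i ≠ e` contains `e` and has `j` elements, so it belongs to
`F_{j-1}`.
-/

namespace CategoryTheory.GrothendieckTopology.Subpresheaf

variable {C : Type*} [Category C] {F : Cᵒᵖ ⥤ Type u}

-- The lattice structure in scope is not Mathlib's `instCompleteLatticeSubfunctor`, but it has the
-- same order, so its meets and joins are Mathlib's objectwise ones.
theorem inf_obj (A B : Subfunctor F) (U : Cᵒᵖ) : (A ⊓ B).obj U = A.obj U ∩ B.obj U := by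
  rw [isGLB_pair.unique (@isGLB_pair _ instCompleteLatticeSubfunctor.toSemilatticeInf A B)]
  rfl

theorem iSup_obj {ι : Sort*} (G : ι → Subfunctor F) (U : Cᵒᵖ) :
    (⨆ i, G i).obj U = ⋃ i, (G i).obj U := by
  rw [isLUB_iSup.unique (@isLUB_iSup _ _ instCompleteLatticeSubfunctor G)]
  exact Subfunctor.iSup_obj G U

theorem inf_iSup_eq {ι : Sort*} (A : Subfunctor F) (G : ι → Subfunctor F) :
    A ⊓ ⨆ i, G i = ⨆ i, A ⊓ G i := by
  ext U : 2
  simp only [inf_obj, iSup_obj, Set.inter_iUnion]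

theorem inf_iSup₂_eq {ι : Sort*} {κ : ι → Sort*} (A : Subfunctor F)
    (G : ∀ i, κ i → Subfunctor F) :
    A ⊓ ⨆ (i) (k), G i k = ⨆ (i) (k), A ⊓ G i k := by
  simp only [inf_iSup_eq]

end CategoryTheory.GrothendieckTopology.Subpresheaf

namespace SSet

theorem face_mono {p : ℕ} {S T : Set (Fin (p + 1))} (h : S ⊆ T) : face p S ≤ face p T :=
  fun _ _ hα => hα.trans h

theorem face_inf_face (p : ℕ) (S T : Set (Fin (p + 1))) :
    face p S ⊓ face p T = face p (S ∩ T) := by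
  ext U α
  simp only [Subpresheaf.inf_obj, Set.mem_inter_iff]
  exact Set.subset_inter_iff.symm

end SSet

theorem face_inter_skeleton_eq_horn_general (p : ℕ) (e : Fin (p + 1))
    (F : Set (Finset (Fin (p + 1)))) (he : ∀ T ∈ F, e ∈ T)
    (j : ℕ) (S : Finset (Fin (p + 1)))
    (heS : e ∈ S) (hcard : S.card = j + 1) (hnot : ∀ T ∈ F, ¬ S ⊆ T) :
    SSet.face p (S : Set (Fin (p + 1))) ⊓
        (⨆ T ∈ F ∪ setOf (fun T : Finset (Fin (p + 1)) => e ∈ T ∧ T.card = j),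
          SSet.face p (T : Set (Fin (p + 1)))) =
      ⨆ i : { i : Fin (p + 1) // i ∈ S ∧ i ≠ e },
        SSet.face p ((S.erase i.1 : Finset (Fin (p + 1))) : Set (Fin (p + 1))) := by
  have hmissed : ∀ T ∈ F ∪ setOf (fun T : Finset (Fin (p + 1)) => e ∈ T ∧ T.card = j),
      ∃ i ∈ S, i ∉ T ∧ i ≠ e := by
    rintro T hT
    obtain ⟨heT, hST⟩ : e ∈ T ∧ ¬ S ⊆ T := by
      rcases hT with hTF | ⟨heT, hT⟩
      · exact ⟨he T hTF, hnot T hTF⟩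
      · exact ⟨heT, fun h => by have := Finset.card_le_card h; omega⟩
    obtain ⟨i, hiS, hiT⟩ := Finset.not_subset.1 hST
    exact ⟨i, hiS, hiT, (ne_of_mem_of_not_mem heT hiT).symm⟩
  apply le_antisymm
  · rw [Subpresheaf.inf_iSup₂_eq]
    refine iSup₂_le fun T hT => ?_
    obtain ⟨i, hiS, hiT, hie⟩ := hmissed T hT
    rw [SSet.face_inf_face]
    exact le_iSup_of_le ⟨i, hiS, hie⟩ <| SSet.face_mono fun x hx =>
      Finset.mem_erase.2 ⟨ne_of_mem_of_not_mem (s := T) hx.2 hiT, hx.1⟩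
  · refine le_inf (iSup_le fun i => SSet.face_mono (S.erase_subset _)) <|
      iSup_le fun ⟨i, hiS, hie⟩ => le_iSup₂_of_le (S.erase i) (Or.inr ⟨?_, ?_⟩) le_rfl
    · exact Finset.mem_erase.2 ⟨hie.symm, heS⟩
    · rw [Finset.card_erase_of_mem hiS, hcard, Nat.add_sub_cancel]

/-- If `Σ` is a face of dimension `j ≥ 1` containing the vertex `e` which is not
contained in any member of `F`, then the intersection of `Face Σ` with the union of
the faces indexed by `F_{j-1} = F ∪ {T : e ∈ T, |T| = j}` is the horn of `Face Σ`
centered at the vertex `e`. -/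
theorem face_inter_skeleton_eq_horn (p : ℕ) (e : Fin (p + 1))
    (F : Set (Finset (Fin (p + 1)))) (he : ∀ T ∈ F, e ∈ T)
    (j : ℕ) (hj : 1 ≤ j) (S : Finset (Fin (p + 1)))
    (heS : e ∈ S) (hcard : S.card = j + 1) (hnot : ∀ T ∈ F, ¬ S ⊆ T) :
    SSet.face p (S : Set (Fin (p + 1))) ⊓
        (⨆ T ∈ F ∪ setOf (fun T : Finset (Fin (p + 1)) => e ∈ T ∧ T.card = j),
          SSet.face p (T : Set (Fin (p + 1)))) =
      ⨆ i : { i : Fin (p + 1) // i ∈ S ∧ i ≠ e },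
        SSet.face p ((S.erase i.1 : Finset (Fin (p + 1))) : Set (Fin (p + 1))) :=
  face_inter_skeleton_eq_horn_general p e F he j S heS hcard hnot
end

section
/- Fix n ≥ 1, k ∈ Fin(n+1), m ≥ 0, and a monotone map ξ : Fin(m+1) → Fin(n+1), with ‖ξ‖, K₀(ξ), λ(ξ), κ(ξ) as defined. Then: (i) K₀(ξ) : Fin(m+1+‖ξ‖) → Fin(n+1) is monotone (nondecreasing); (ii) λ(ξ) : Fin(m+1) → Fin(m+1+‖ξ‖) is a strictly monotone injection; (iii) K₀(ξ) ∘ λ(ξ) = ξ; and (iv) the image of λ(ξ) is exactly the complement in Fin(m+1+‖ξ‖) of the image of κ(ξ). -/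
open CategoryTheory Simplicial CategoryTheory.GrothendieckTopology

universe u

section Xi

variable {n m : ℕ} (k : Fin (n + 1)) (ξ : Fin (m + 1) →o Fin (n + 1))

/-- The fiber `ξ_j = {i : ξ i = j}` of `ξ` over `j : Fin (n+1)`, ordered as a subset
of `Fin (m+1)`. -/
abbrev xiFiber (j : Fin (n + 1)) : Type := { i : Fin (m + 1) // ξ i = j }

/-- The product `∏_{j ≠ k} ξ_j` of the fibers of `ξ` away from `k`, equipped with the
lexicographic order. -/
abbrev xiProd : Type := Lex (∀ j : { j : Fin (n + 1) // j ≠ k }, xiFiber ξ j.1)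

/-- The lexicographic linear order on `∏_{j ≠ k} ξ_j`. -/
noncomputable instance : LinearOrder (xiProd k ξ) :=
  @Pi.Lex.linearOrder { j : Fin (n + 1) // j ≠ k }
    (fun j => xiFiber ξ j.1) _ Finite.to_wellFoundedLT _

instance : Fintype (xiProd k ξ) :=
  inferInstanceAs (Fintype (∀ j : { j : Fin (n + 1) // j ≠ k }, xiFiber ξ j.1))

/-- `‖ξ‖`, the number of elements of the product `∏_{j ≠ k} ξ_j`. -/
noncomputable def xiNorm : ℕ := Fintype.card (xiProd k ξ)

/-- The number of `i` with `ξ i < k`; this is the least index `i` with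
`K₀(ξ)(i) = k`, i.e. the start of the interval complementary to the image of `λ(ξ)`. -/
noncomputable def xiStart : ℕ := Fintype.card { i : Fin (m + 1) // ξ i < k }

lemma xiStart_le : xiStart k ξ ≤ m + 1 := by
  simpa [xiStart] using Fintype.card_subtype_le (fun i : Fin (m + 1) => ξ i < k)

/-- `K₀(ξ) : Fin (m+1+‖ξ‖) → Fin (n+1)`, defined by `K₀(ξ)(i) = ξ(i)` if `i ≤ m` and
`ξ(i) < k`; `K₀(ξ)(i) = ξ(i-‖ξ‖)` if `i ≥ ‖ξ‖` and `ξ(i-‖ξ‖) > k`; and `K₀(ξ)(i) = k`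
otherwise. -/
noncomputable def K0 (i : Fin (m + xiNorm k ξ + 1)) : Fin (n + 1) :=
  if h : i.1 ≤ m ∧ ξ ⟨min i.1 m, by omega⟩ < k then ξ ⟨min i.1 m, by omega⟩
  else if h' : xiNorm k ξ ≤ i.1 ∧ k < ξ ⟨i.1 - xiNorm k ξ, by have := i.isLt; omega⟩ then
    ξ ⟨i.1 - xiNorm k ξ, by have := i.isLt; omega⟩
  else k

/-- `λ(ξ) : Fin (m+1) → Fin (m+1+‖ξ‖)`: `λ(ξ)(i) = i` if `ξ i < k` and
`λ(ξ)(i) = i + ‖ξ‖` if `ξ i ≥ k`. -/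
noncomputable def lam (i : Fin (m + 1)) : Fin (m + xiNorm k ξ + 1) :=
  if ξ i < k then ⟨i.1, by omega⟩ else ⟨i.1 + xiNorm k ξ, by omega⟩

/-- The enumeration of the lexicographically ordered product `∏_{j ≠ k} ξ_j` by
`Fin ‖ξ‖`. -/
noncomputable def xiLexIso : Fin (xiNorm k ξ) ≃o xiProd k ξ :=
  Fintype.orderIsoFinOfCardEq _ rfl

/-- `κ(ξ)`: the order-preserving injection sending the lexicographic product
`∏_{j ≠ k} ξ_j` onto the interval of length `‖ξ‖` in `Fin (m+1+‖ξ‖)` starting at the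
least index `i` with `K₀(ξ)(i) = k` (the complement of the image of `λ(ξ)`). -/
noncomputable def kappa (x : xiProd k ξ) : Fin (m + xiNorm k ξ + 1) :=
  ⟨xiStart k ξ + ((xiLexIso k ξ).symm x).1, by
    have h1 := xiStart_le k ξ
    have h2 := ((xiLexIso k ξ).symm x).2
    omega⟩

end Xi

/-!
Since `ξ` is monotone, `{i | ξ i < k}` is the initial segment `[0, c)` with `c = xiStart k ξ`.
Hence `K₀(ξ)` is `ξ` on `[0, c)`, constantly `k` on `[c, c + ‖ξ‖)` and `ξ` shifted by `‖ξ‖`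
beyond, while `λ(ξ)` is the identity below `c` and the shift by `‖ξ‖` above: it skips exactly
the interval `[c, c + ‖ξ‖)`, which is the image of `κ(ξ)`.
-/

theorem Monotone.lt_iff_lt_card {α : Type*} [Preorder α] {n : ℕ} {f : Fin n → α}
    (hf : Monotone f) (a : α) [Fintype { j // f j < a }] (i : Fin n) :
    f i < a ↔ (i : ℕ) < Fintype.card { j // f j < a } := by
  have card_le : Fintype.card { j : Fin n // j ≤ i } = i + 1 := by
    rw [Fintype.card_subtype, Finset.filter_ge_eq_Iic, Fin.card_Iic]
  have card_lt : Fintype.card { j : Fin n // j < i } = i := by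
    rw [Fintype.card_subtype, Finset.filter_gt_eq_Iio, Fin.card_Iio]
  constructor
  · intro hi
    have := Fintype.card_subtype_mono (· ≤ i) (f · < a) fun j hj => (hf hj).trans_lt hi
    omega
  · intro hi
    by_contra hia
    have := Fintype.card_subtype_mono (f · < a) (· < i)
      fun j hj => lt_of_not_ge fun hij => hia ((hf hij).trans_lt hj)
    omega

section Xi

variable {n m : ℕ} (k : Fin (n + 1)) (ξ : Fin (m + 1) →o Fin (n + 1))

lemma lt_xiStart_iff (i : Fin (m + 1)) : ξ i < k ↔ (i : ℕ) < xiStart k ξ :=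
  ξ.monotone.lt_iff_lt_card k i

lemma K0_of_lt_xiStart (i : Fin (m + xiNorm k ξ + 1)) (hi : (i : ℕ) < xiStart k ξ) :
    K0 k ξ i = ξ ⟨i, by have := xiStart_le k ξ; omega⟩ := by
  have hm : (i : ℕ) ≤ m := by have := xiStart_le k ξ; omega
  have hξ := (lt_xiStart_iff k ξ ⟨i, by omega⟩).2 hi
  rw [K0, dif_pos ⟨hm, by simpa [hm] using hξ⟩]
  simp [hm]

lemma K0_of_xiStart_le (i : Fin (m + xiNorm k ξ + 1)) (hi : xiStart k ξ ≤ i) :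
    K0 k ξ i = if h : xiNorm k ξ ≤ i ∧ k < ξ ⟨i - xiNorm k ξ, by omega⟩ then
      ξ ⟨i - xiNorm k ξ, by omega⟩ else k := by
  rw [K0, dif_neg]
  rintro ⟨hm, hξ⟩
  have := (lt_xiStart_iff k ξ _).1 hξ
  simp only [min_eq_left hm] at this
  omega

lemma K0_of_xiStart_le_of_lt (i : Fin (m + xiNorm k ξ + 1)) (hi : xiStart k ξ ≤ i)
    (hi' : (i : ℕ) < xiStart k ξ + xiNorm k ξ) : K0 k ξ i = k := by
  rw [K0_of_xiStart_le k ξ i hi, dif_neg]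
  rintro ⟨hN, hξ⟩
  exact hξ.not_gt ((lt_xiStart_iff k ξ _).2 (by simp only; omega))

lemma K0_of_xiStart_add_le (i : Fin (m + xiNorm k ξ + 1))
    (hi : xiStart k ξ + xiNorm k ξ ≤ i) : K0 k ξ i = ξ ⟨i - xiNorm k ξ, by omega⟩ := by
  have hk : k ≤ ξ ⟨i - xiNorm k ξ, by omega⟩ :=
    not_lt.1 fun h => by have := (lt_xiStart_iff k ξ _).1 h; simp only at this; omega
  rw [K0_of_xiStart_le k ξ i (by omega)]
  split_ifs with h
  · rfl
  · exact hk.antisymm (not_lt.1 fun h' => h ⟨by omega, h'⟩)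

lemma k_le_K0_of_xiStart_le (i : Fin (m + xiNorm k ξ + 1)) (hi : xiStart k ξ ≤ i) :
    k ≤ K0 k ξ i := by
  rcases lt_or_ge (i : ℕ) (xiStart k ξ + xiNorm k ξ) with hi' | hi'
  · rw [K0_of_xiStart_le_of_lt k ξ i hi hi']
  · rw [K0_of_xiStart_add_le k ξ i hi']
    exact not_lt.1 fun h => by have := (lt_xiStart_iff k ξ _).1 h; simp only at this; omega

lemma K0_monotone : Monotone (K0 k ξ) := by
  intro i j (hij : (i : ℕ) ≤ j)
  rcases lt_or_ge (j : ℕ) (xiStart k ξ) with hj | hj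
  · rw [K0_of_lt_xiStart k ξ i (by omega), K0_of_lt_xiStart k ξ j hj]
    exact ξ.monotone (Fin.mk_le_mk.2 hij)
  rcases lt_or_ge (i : ℕ) (xiStart k ξ) with hi | hi
  · rw [K0_of_lt_xiStart k ξ i hi]
    exact ((lt_xiStart_iff k ξ _).2 hi).le.trans (k_le_K0_of_xiStart_le k ξ j hj)
  rcases lt_or_ge (i : ℕ) (xiStart k ξ + xiNorm k ξ) with hi' | hi'
  · rw [K0_of_xiStart_le_of_lt k ξ i hi hi']
    exact k_le_K0_of_xiStart_le k ξ j hj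
  · rw [K0_of_xiStart_add_le k ξ i hi', K0_of_xiStart_add_le k ξ j (by omega)]
    exact ξ.monotone (Fin.mk_le_mk.2 (by omega))

lemma lam_of_lt_xiStart (i : Fin (m + 1)) (hi : (i : ℕ) < xiStart k ξ) :
    (lam k ξ i : ℕ) = i := by
  rw [lam, if_pos ((lt_xiStart_iff k ξ i).2 hi)]

lemma lam_of_xiStart_le (i : Fin (m + 1)) (hi : xiStart k ξ ≤ i) :
    (lam k ξ i : ℕ) = i + xiNorm k ξ := by
  rw [lam, if_neg fun h => by have := (lt_xiStart_iff k ξ i).1 h; omega]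

lemma lam_strictMono : StrictMono (lam k ξ) := by
  intro i j (hij : (i : ℕ) < j)
  show (lam k ξ i : ℕ) < lam k ξ j
  rcases lt_or_ge (i : ℕ) (xiStart k ξ) with hi | hi <;>
    rcases lt_or_ge (j : ℕ) (xiStart k ξ) with hj | hj <;>
    simp only [lam_of_lt_xiStart, lam_of_xiStart_le, *] <;> omega

lemma K0_lam (i : Fin (m + 1)) : K0 k ξ (lam k ξ i) = ξ i := by
  rcases lt_or_ge (i : ℕ) (xiStart k ξ) with hi | hi
  · have hlam := lam_of_lt_xiStart k ξ i hi
    rw [K0_of_lt_xiStart k ξ _ (by omega)]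
    exact congrArg ξ (Fin.ext hlam)
  · have hlam := lam_of_xiStart_le k ξ i hi
    rw [K0_of_xiStart_add_le k ξ _ (by omega)]
    exact congrArg ξ (Fin.ext (by simp only [hlam]; omega))

lemma mem_range_lam_iff (j : Fin (m + xiNorm k ξ + 1)) :
    j ∈ Set.range (lam k ξ) ↔ (j : ℕ) < xiStart k ξ ∨ xiStart k ξ + xiNorm k ξ ≤ j := by
  have hc := xiStart_le k ξ
  constructor
  · rintro ⟨i, rfl⟩
    rcases lt_or_ge (i : ℕ) (xiStart k ξ) with hi | hi
    · exact .inl (by rw [lam_of_lt_xiStart k ξ i hi]; exact hi)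
    · exact .inr (by rw [lam_of_xiStart_le k ξ i hi]; omega)
  · rintro (hj | hj)
    · exact ⟨⟨j, by omega⟩, Fin.ext (lam_of_lt_xiStart k ξ _ hj)⟩
    · exact ⟨⟨j - xiNorm k ξ, by omega⟩,
        Fin.ext ((lam_of_xiStart_le k ξ _ (by simp only; omega)).trans (by simp only; omega))⟩

lemma mem_range_kappa_iff (j : Fin (m + xiNorm k ξ + 1)) :
    j ∈ Set.range (kappa k ξ) ↔ xiStart k ξ ≤ j ∧ (j : ℕ) < xiStart k ξ + xiNorm k ξ := by
  constructor
  · rintro ⟨x, rfl⟩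
    have := ((xiLexIso k ξ).symm x).2
    simp [kappa]
  · rintro ⟨h₁, h₂⟩
    refine ⟨xiLexIso k ξ ⟨j - xiStart k ξ, by omega⟩, Fin.ext ?_⟩
    simp only [kappa, OrderIso.symm_apply_apply]
    omega

end Xi

theorem K0_lam_kappa_properties_general (n m : ℕ) (k : Fin (n + 1))
    (ξ : Fin (m + 1) →o Fin (n + 1)) :
    Monotone (K0 k ξ) ∧
      (StrictMono (lam k ξ) ∧ Function.Injective (lam k ξ)) ∧
      (∀ i, K0 k ξ (lam k ξ i) = ξ i) ∧
      Set.range (lam k ξ) = (Set.range (kappa k ξ))ᶜ := by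
  refine ⟨K0_monotone k ξ, ⟨lam_strictMono k ξ, (lam_strictMono k ξ).injective⟩,
    K0_lam k ξ, ?_⟩
  ext j
  rw [Set.mem_compl_iff, mem_range_lam_iff, mem_range_kappa_iff]
  omega

/-- Basic properties of `K₀(ξ)`, `λ(ξ)` and `κ(ξ)`: `K₀(ξ)` is monotone, `λ(ξ)` is a
strictly monotone injection, `K₀(ξ) ∘ λ(ξ) = ξ`, and the image of `λ(ξ)` is exactly
the complement of the image of `κ(ξ)`. -/
theorem K0_lam_kappa_properties (n m : ℕ) (hn : 1 ≤ n) (k : Fin (n + 1))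
    (ξ : Fin (m + 1) →o Fin (n + 1)) :
    Monotone (K0 k ξ) ∧
      (StrictMono (lam k ξ) ∧ Function.Injective (lam k ξ)) ∧
      (∀ i, K0 k ξ (lam k ξ i) = ξ i) ∧
      Set.range (lam k ξ) = (Set.range (kappa k ξ))ᶜ :=
  K0_lam_kappa_properties_general n m k ξ
end
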